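/- arXiv:1105.1696 — 8 statements merged into one kernel-verified Lean document; each statement's English description precedes it below -/
import Mathlib

section
/- Let K be a field, let d ≥ 2 with (d : K) ≠ 0, let x₁, …, x_d be d distinct elements of K, and set f(x) = ∏_{i=1}^d (x − x_i). Suppose P, Q ∈ K[x] are coprime polynomials with deg Q ≤ d − 1 and deg(x·Q(x) − P(x)) ≤ d − 1 (so that ψ(x) = x − P(x)/Q(x) defines a rational map of degree at most d − 1 on P¹), and suppose that for each i: P(x_i) = 0 (each x_i is a fixed point of ψ) and P′(x_i) = d·Q(x_i) (the multiplier of ψ at x_i equals 1 − d). Then there exists a nonzero constant c ∈ K with P = c·d·f and Q = c·f′; in other words, ψ(x) = x − d·f(x)/f′(x) is the almost-Newton map of f. -/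
open Polynomial

/-- **Maps with the fixed-point/multiplier data of an almost-Newton map are almost-Newton.**
Let `K` be a field, `d ≥ 2` with `(d : K) ≠ 0`, let `x₁, …, x_d` be distinct elements of `K`,
and `f = ∏ (x − xᵢ)`.  If `P, Q` are coprime with `deg Q ≤ d − 1`, `deg (x·Q − P) ≤ d − 1`,
each `xᵢ` satisfies `P(xᵢ) = 0` (fixed point of `ψ = x − P/Q`) and
`P'(xᵢ) = d·Q(xᵢ)` (multiplier `1 − d`), then there is a nonzero constant `c` with
`P = c·d·f` and `Q = c·f'`; i.e. `ψ` is the almost-Newton map of `f`. -/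
theorem almost_newton_determined_by_fixed_points
    {K : Type*} [Field K] (d : ℕ) (hd : 2 ≤ d) (hdK : (d : K) ≠ 0)
    (x : Fin d → K) (hx : Function.Injective x)
    (f : K[X]) (hf : f = ∏ i, (X - C (x i)))
    (P Q : K[X]) (hcop : IsCoprime P Q)
    (hQdeg : Q.natDegree ≤ d - 1)
    (hXQP : (X * Q - P).natDegree ≤ d - 1)
    (hfix : ∀ i, P.eval (x i) = 0)
    (hmult : ∀ i, (derivative P).eval (x i) = (d : K) * Q.eval (x i)) :
    ∃ c : K, c ≠ 0 ∧ P = C (c * d) * f ∧ Q = C c * derivative f := by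
  subst hf
  set f := ∏ i, (X - C (x i)) with hf
  have hfm : f.Monic := monic_prod_of_monic _ _ fun i _ => monic_X_sub_C _
  have hfd : f.natDegree = d := by
    rw [hf, natDegree_prod _ _ fun i _ => X_sub_C_ne_zero _]
    simp
  -- degree bound on P
  have hPdeg : P.natDegree ≤ d := by
    have hP : P = X * Q - (X * Q - P) := by ring
    have h1 : (X * Q).natDegree ≤ d := by
      refine natDegree_mul_le.trans ?_
      rw [natDegree_X]; omega
    calc P.natDegree = (X * Q - (X * Q - P)).natDegree := by rw [← hP]
      _ ≤ max (X * Q).natDegree (X * Q - P).natDegree := natDegree_sub_le _ _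
      _ ≤ d := max_le h1 (hXQP.trans (by omega))
  -- f divides P
  have hdvd : f ∣ P := by
    refine Finset.prod_dvd_of_coprime (fun i _ j _ hij => ?_)
      (fun i _ => dvd_iff_isRoot.mpr (hfix i))
    exact pairwise_coprime_X_sub_C hx hij
  obtain ⟨g, hPg⟩ := hdvd
  -- P ≠ 0
  have hP0 : P ≠ 0 := by
    intro h0
    have hu : IsUnit Q := isCoprime_zero_left.mp (h0 ▸ hcop)
    obtain ⟨r, hr, hrQ⟩ := Polynomial.isUnit_iff.mp hu
    have := hmult ⟨0, by omega⟩
    rw [h0, ← hrQ] at this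
    simp at this
    rcases this with h | h
    · exact hdK h
    · exact hr.ne_zero h
  have hg0 : g ≠ 0 := fun h => hP0 (by simp [hPg, h])
  have hgdeg : g.natDegree = 0 := by
    have := natDegree_mul hfm.ne_zero hg0
    rw [← hPg] at this
    omega
  obtain ⟨a, hga⟩ : ∃ a, g = C a := ⟨g.coeff 0, (eq_C_of_natDegree_eq_zero hgdeg)⟩
  have ha0 : a ≠ 0 := fun h => hg0 (by simp [hga, h])
  have hPa : P = C a * f := by rw [hPg, hga]; ring
  -- the difference polynomial vanishes
  have hzero : C a * derivative f - C (d : K) * Q = 0 := by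
    have hdvd2 : f ∣ (C a * derivative f - C (d : K) * Q) := by
      refine Finset.prod_dvd_of_coprime (fun i _ j _ hij => ?_)
        (fun i _ => dvd_iff_isRoot.mpr ?_)
      · exact pairwise_coprime_X_sub_C hx hij
      · have h1 := hmult i
        have h2 : derivative P = C a * derivative f := by
          rw [hPa]; simp
        rw [h2] at h1
        simp only [IsRoot, eval_sub, eval_mul, eval_C] at *
        rw [h1]; ring
    by_contra hne
    have hlt : (C a * derivative f - C (d : K) * Q).natDegree < f.natDegree := by
      have h1 : (C a * derivative f).natDegree ≤ d - 1 := by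
        refine natDegree_mul_le.trans ?_
        have := natDegree_derivative_le f
        simp only [natDegree_C]
        omega
      have h2 : (C (d : K) * Q).natDegree ≤ d - 1 := by
        refine natDegree_mul_le.trans ?_
        simp only [natDegree_C]
        omega
      have := (natDegree_sub_le (C a * derivative f) (C (d : K) * Q)).trans
        (max_le h1 h2)
      omega
    exact hne (eq_zero_of_dvd_of_natDegree_lt hdvd2 hlt)
  have hQ : Q = C (a * (d : K)⁻¹) * derivative f := by
    have h : C (d : K) * Q = C a * derivative f := by
      have := sub_eq_zero.mp hzero; linear_combination -this
    have h2 : C ((d : K)⁻¹) * (C (d : K) * Q) = C ((d : K)⁻¹) * (C a * derivative f) := by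
      rw [h]
    rw [← mul_assoc, ← C_mul, inv_mul_cancel₀ hdK, C_1, one_mul, ← mul_assoc, ← C_mul,
      mul_comm ((d : K)⁻¹) a] at h2
    exact h2
  refine ⟨a * (d : K)⁻¹, by simp [ha0, hdK], ?_, hQ⟩
  rw [hPa]
  congr 1
  rw [mul_assoc, inv_mul_cancel₀ hdK, mul_one]
end

section
/- Let K be a field, let F ∈ K[X,Y] be a homogeneous polynomial of degree d, and let γ = [[a, b], [c, e]] ∈ GL₂(K). Define G ∈ K[X,Y] by G(X,Y) = F(aX + bY, cX + eY). Then for every (x, y) ∈ K², the vector identity (G_Y(x,y), −G_X(x,y)) = (det γ) · γ⁻¹ · (F_Y(γ·(x,y)), −F_X(γ·(x,y))) holds, where γ·(x,y) = (ax + by, cx + ey). Consequently, on P¹ one has γ⁻¹ ∘ φ_F ∘ γ = φ_G, i.e. the family of maps of the form φ_F is invariant under conjugation by PGL₂. -/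
/-!
By the chain rule, the gradient of `G = F ∘ γ` is `∇G(v) = γᵀ ∇F(γ v)`. Writing
`J (x, y) = (y, -x)`, we have `φ_F = J ∘ ∇F`, and for a `2 × 2` matrix `J γᵀ = adj(γ) J`,
with `adj(γ) = det γ · γ⁻¹` when `γ` is invertible.
-/

open MvPolynomial

namespace MvPolynomial

variable {R σ τ : Type*} [CommSemiring R]

theorem pderiv_aeval [Fintype σ] (g : σ → MvPolynomial τ R) (p : MvPolynomial σ R) (i : τ) :
    pderiv i (aeval g p) = ∑ j, aeval g (pderiv j p) * pderiv i (g j) := by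
  classical
  induction p using MvPolynomial.induction_on with
  | C r => simp
  | add p q hp hq => simp only [map_add, hp, hq, add_mul, Finset.sum_add_distrib]
  | mul_X p n hp =>
    simp only [map_mul, aeval_X, pderiv_mul, hp, pderiv_X, map_add, add_mul, Finset.sum_add_distrib,
      Finset.sum_mul]
    congr 1
    · exact Finset.sum_congr rfl fun j _ => mul_right_comm _ _ _
    · simp [Pi.single_apply]

theorem eval_aeval (g : σ → MvPolynomial τ R) (p : MvPolynomial σ R) (v : τ → R) :
    eval v (aeval g p) = eval (fun j => eval v (g j)) p := by
  simpa using aeval_bind₁ v g p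

end MvPolynomial

namespace Matrix

variable {R m n : Type*} [CommSemiring R] [Fintype n]

theorem pderiv_toMvPolynomial (M : Matrix m n R) (i : m) (j : n) :
    pderiv j (M.toMvPolynomial i) = C (M i j) := by
  classical
  simp [toMvPolynomial, pderiv_monomial, Finsupp.single_apply, apply_ite (monomial _)]

theorem eval_aeval_toMvPolynomial (M : Matrix m n R) (p : MvPolynomial m R) (v : n → R) :
    eval v (aeval M.toMvPolynomial p) = eval (M *ᵥ v) p := by
  simp only [eval_aeval, toMvPolynomial_eval_eq_apply]

theorem eval_pderiv_aeval_toMvPolynomial [Fintype m] (M : Matrix m n R) (p : MvPolynomial m R)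
    (v : n → R) (j : n) :
    eval v (pderiv j (aeval M.toMvPolynomial p)) =
      ((fun i => eval (M *ᵥ v) (pderiv i p)) ᵥ* M) j := by
  simp only [pderiv_aeval, pderiv_toMvPolynomial, map_sum, map_mul, eval_aeval_toMvPolynomial,
    eval_C, vecMul, dotProduct]

theorem det_smul_inv_mulVec_rotate {K : Type*} [CommRing K] (A : Matrix (Fin 2) (Fin 2) K)
    (hA : IsUnit A.det) (w : Fin 2 → K) :
    A.det • (A⁻¹ *ᵥ ![w 1, -w 0]) = ![(w ᵥ* A) 1, -(w ᵥ* A) 0] := by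
  rw [← smul_mulVec, inv_def, smul_smul, Ring.mul_inverse_cancel _ hA, one_smul, adjugate_fin_two]
  ext i
  fin_cases i <;> simp [mulVec, vecMul, dotProduct, Fin.sum_univ_two] <;> ring

end Matrix

theorem phiF_family_PGL2_invariant_general
    {K : Type*} [Field K] (F : MvPolynomial (Fin 2) K)
    (a b c e : K) (hdet : a * e - b * c ≠ 0)
    (G : MvPolynomial (Fin 2) K)
    (hG : G = aeval ![C a * X 0 + C b * X 1, C c * X 0 + C e * X 1] F) :
    ∀ v : Fin 2 → K,
      ![eval v (pderiv 1 G), -(eval v (pderiv 0 G))]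
        = (a * e - b * c) •
            (!![a, b; c, e])⁻¹.mulVec
              ![eval ((!![a, b; c, e]).mulVec v) (pderiv 1 F),
                -(eval ((!![a, b; c, e]).mulVec v) (pderiv 0 F))] := by
  intro v
  set M := !![a, b; c, e]
  set w := fun i => eval (M.mulVec v) (pderiv i F)
  have hsubst : ![C a * X 0 + C b * X 1, C c * X 0 + C e * X 1] = M.toMvPolynomial := by
    ext1 i
    fin_cases i <;> simp [M, Matrix.toMvPolynomial, Fin.sum_univ_two, C_mul_X_eq_monomial]
  have hM : IsUnit M.det := by simpa [M, Matrix.det_fin_two_of] using hdet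
  calc ![eval v (pderiv 1 G), -(eval v (pderiv 0 G))]
      = ![(Matrix.vecMul w M) 1, -(Matrix.vecMul w M) 0] := by
        rw [hG, hsubst, Matrix.eval_pderiv_aeval_toMvPolynomial,
          Matrix.eval_pderiv_aeval_toMvPolynomial]
    _ = M.det • M⁻¹.mulVec ![w 1, -w 0] := (M.det_smul_inv_mulVec_rotate hM w).symm
    _ = _ := by rw [Matrix.det_fin_two_of]

/-- **The family `φ_F = (F_Y, −F_X)` is invariant under conjugation by `PGL₂`.**
For `F ∈ K[X,Y]` homogeneous of degree `d`, `γ = [[a,b],[c,e]] ∈ GL₂(K)` and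
`G(X,Y) = F(aX + bY, cX + eY)`, for every `v = (x,y) ∈ K²` one has the vector identity
`(G_Y(v), −G_X(v)) = (det γ) · γ⁻¹ · (F_Y(γ·v), −F_X(γ·v))`,
which says exactly that `γ⁻¹ ∘ φ_F ∘ γ = φ_G` on `P¹`. -/
theorem phiF_family_PGL2_invariant
    {K : Type*} [Field K] (d : ℕ) (F : MvPolynomial (Fin 2) K) (hF : F.IsHomogeneous d)
    (a b c e : K) (hdet : a * e - b * c ≠ 0)
    (G : MvPolynomial (Fin 2) K)
    (hG : G = aeval ![C a * X 0 + C b * X 1, C c * X 0 + C e * X 1] F) :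
    ∀ v : Fin 2 → K,
      ![eval v (pderiv 1 G), -(eval v (pderiv 0 G))]
        = (a * e - b * c) •
            (!![a, b; c, e])⁻¹.mulVec
              ![eval ((!![a, b; c, e]).mulVec v) (pderiv 1 F),
                -(eval ((!![a, b; c, e]).mulVec v) (pderiv 0 F))] :=
  phiF_family_PGL2_invariant_general F a b c e hdet G hG
end

section
/- Let K be a field, let d ≥ 2 with (d : K) invertible in K, and let F ∈ K[X,Y] be homogeneous of degree d. Define sequences of polynomials A_n, B_n ∈ K[x] by A₀ = x, B₀ = 1, A_{n+1}(x) = F_Y(A_n(x), B_n(x)), B_{n+1}(x) = −F_X(A_n(x), B_n(x)), so that (A_n, B_n) represents the n-th iterate of φ_F on the affine chart, and set Ψ_n(x) = (A_n(x) − x·B_n(x))/d (a polynomial whose roots contain the affine n-periodic points, and one has A_n/B_n = x + d·Ψ_n/B_n). Then for every n ≥ 0, the polynomial B_n(x) divides d·F(A_n(x), B_n(x)) − (A_n(x) − x·B_n(x))·F_X(A_n(x), B_n(x)); equivalently, Ψ_{n+1}·B_{n+1} = −(F(A_n, B_n) − Ψ_n·F_X(A_n, B_n)) with B_n dividing F(A_n,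 B_n) − Ψ_n·F_X(A_n, B_n). -/
/-! Euler's identity `X·F_X + Y·F_Y = d·F`, evaluated at `(a, b) = (A_n, B_n)`, gives
`d·F(a, b) − (a − x·b)·F_X(a, b) = b·(F_Y(a, b) + x·F_X(a, b))`. -/

namespace MvPolynomial

theorem IsHomogeneous.aeval_euler_fin_two {R S : Type*} [CommSemiring R] [CommSemiring S]
    [Algebra R S] {d : ℕ} {F : MvPolynomial (Fin 2) R} (hF : F.IsHomogeneous d) (a b : S) :
    a * MvPolynomial.aeval ![a, b] (pderiv 0 F) + b * MvPolynomial.aeval ![a, b] (pderiv 1 F) =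
      (d : S) * MvPolynomial.aeval ![a, b] F := by
  simpa [Fin.sum_univ_two] using congrArg (MvPolynomial.aeval ![a, b]) hF.sum_X_mul_pderiv

theorem IsHomogeneous.dvd_natCast_mul_aeval_sub_mul_aeval_pderiv_zero {R S : Type*}
    [CommSemiring R] [CommRing S] [Algebra R S] {d : ℕ} {F : MvPolynomial (Fin 2) R}
    (hF : F.IsHomogeneous d) (a b c : S) :
    b ∣ (d : S) * MvPolynomial.aeval ![a, b] F -
      (a - c * b) * MvPolynomial.aeval ![a, b] (pderiv 0 F) :=
  ⟨MvPolynomial.aeval ![a, b] (pderiv 1 F) + c * MvPolynomial.aeval ![a, b] (pderiv 0 F), by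
    linear_combination -hF.aeval_euler_fin_two a b⟩

end MvPolynomial

theorem Bn_dvd_periodic_point_recursion_general
    {K : Type*} [Field K] (d : ℕ)
    (F : MvPolynomial (Fin 2) K) (hF : F.IsHomogeneous d)
    (A B : ℕ → Polynomial K) :
    ∀ n : ℕ,
      B n ∣ Polynomial.C (d : K) * MvPolynomial.aeval ![A n, B n] F
            - (A n - Polynomial.X * B n) * MvPolynomial.aeval ![A n, B n] (MvPolynomial.pderiv 0 F) := by
  intro n
  rw [map_natCast]
  exact hF.dvd_natCast_mul_aeval_sub_mul_aeval_pderiv_zero (A n) (B n) Polynomial.X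

/-- **Divisibility underlying the recursion for the periodic-point polynomials `Ψ_n`.**
Let `F ∈ K[X,Y]` be homogeneous of degree `d ≥ 2` with `(d : K) ≠ 0`, and define
`A₀ = x`, `B₀ = 1`, `A_{n+1} = F_Y(A_n, B_n)`, `B_{n+1} = −F_X(A_n, B_n)`, so that
`(A_n, B_n)` represents the `n`-th iterate of `φ_F` on the affine chart and
`Ψ_n = (A_n − x·B_n)/d`.  Then for every `n`, the polynomial `B_n` divides
`d·F(A_n, B_n) − (A_n − x·B_n)·F_X(A_n, B_n)`. -/
theorem Bn_dvd_periodic_point_recursion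
    {K : Type*} [Field K] (d : ℕ) (hd : 2 ≤ d) (hdK : (d : K) ≠ 0)
    (F : MvPolynomial (Fin 2) K) (hF : F.IsHomogeneous d)
    (A B : ℕ → Polynomial K)
    (hA0 : A 0 = Polynomial.X) (hB0 : B 0 = 1)
    (hA : ∀ n, A (n + 1) = MvPolynomial.aeval ![A n, B n] (MvPolynomial.pderiv 1 F))
    (hB : ∀ n, B (n + 1) = -MvPolynomial.aeval ![A n, B n] (MvPolynomial.pderiv 0 F)) :
    ∀ n : ℕ,
      B n ∣ Polynomial.C (d : K) * MvPolynomial.aeval ![A n, B n] F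
            - (A n - Polynomial.X * B n) * MvPolynomial.aeval ![A n, B n] (MvPolynomial.pderiv 0 F) :=
  Bn_dvd_periodic_point_recursion_general d F hF A B
end

section
/- Let K be a field, let d ≥ 2, let r ∈ K be nonzero, let x₁, …, x_{d−1} be d − 1 distinct elements of K, and set f(x) = ∏_{i=1}^{d−1} (x − x_i). Suppose P, Q ∈ K[x] are coprime polynomials with deg P = d − 1 and deg Q ≤ d − 2 (so that ψ(x) = x − P(x)/Q(x) is a rational map of degree d − 1 fixing the point at infinity), and suppose that for each i: P(x_i) = 0 (each x_i is an affine fixed point of ψ) and P′(x_i) = r·Q(x_i) (the multiplier of ψ at x_i equals 1 − r). Then there exists a nonzero constant c ∈ K with P = c·r·f and Q = c·f′; in other words, ψ(x) = x − r·f(x)/f′(x) is the modified Newton–Raphson map of f with parameter r. -/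
open Polynomial

/-- **Maps with the fixed-point/multiplier data of a modified Newton–Raphson map are such maps.**
Let `K` be a field, `d ≥ 2`, `r ∈ K` nonzero, let `x₁, …, x_{d−1}` be distinct elements of `K`
and `f = ∏ (x − xᵢ)`.  If `P, Q` are coprime with `deg P = d − 1`, `deg Q ≤ d − 2`
(so `ψ = x − P/Q` has degree `d − 1` and fixes `∞`), each `xᵢ` satisfies `P(xᵢ) = 0` and
`P'(xᵢ) = r·Q(xᵢ)` (multiplier `1 − r`), then there is a nonzero constant `c` with
`P = c·r·f` and `Q = c·f'`; i.e. `ψ(x) = x − r·f(x)/f'(x)`. -/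
theorem modified_newton_determined_by_fixed_points
    {K : Type*} [Field K] (d : ℕ) (hd : 2 ≤ d) (r : K) (hr : r ≠ 0)
    (x : Fin (d - 1) → K) (hx : Function.Injective x)
    (f : K[X]) (hf : f = ∏ i, (X - C (x i)))
    (P Q : K[X]) (hcop : IsCoprime P Q)
    (hPdeg : P.natDegree = d - 1) (hQdeg : Q.natDegree ≤ d - 2)
    (hfix : ∀ i, P.eval (x i) = 0)
    (hmult : ∀ i, (derivative P).eval (x i) = r * Q.eval (x i)) :
    ∃ c : K, c ≠ 0 ∧ P = C (c * r) * f ∧ Q = C c * derivative f := by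
  have hfmonic : f.Monic := by
    rw [hf]; exact monic_prod_of_monic _ _ fun i _ => monic_X_sub_C _
  have hfdeg : f.natDegree = d - 1 := by
    rw [hf, natDegree_prod _ _ fun i _ => X_sub_C_ne_zero (x i)]
    simp
  have hfeval : ∀ i, f.eval (x i) = 0 := by
    intro i
    rw [hf]
    simp only [eval_prod, eval_sub, eval_X, eval_C]
    exact Finset.prod_eq_zero (Finset.mem_univ i) (by ring)
  have hPne : P ≠ 0 := fun h => by simp [h] at hPdeg; omega
  set a := P.leadingCoeff with ha
  have haz : a ≠ 0 := leadingCoeff_ne_zero.mpr hPne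
  have hcard : Fintype.card (Fin (d - 1)) = d - 1 := Fintype.card_fin _
  have hdeq : P.degree = (C a * f).degree := by
    rw [degree_C_mul haz, degree_eq_natDegree hPne,
      degree_eq_natDegree hfmonic.ne_zero, hPdeg, hfdeg]
  have hlc : P.leadingCoeff = (C a * f).leadingCoeff := by
    rw [leadingCoeff_mul, leadingCoeff_C, hfmonic.leadingCoeff, mul_one]
  have hPf : P = C a * f := by
    have h1 : P - C a * f = 0 := by
      by_contra hne
      have hdlt : (P - C a * f).degree < P.degree := degree_sub_lt hdeq hPne hlc
      have h2 : (P - C a * f).natDegree < d - 1 := by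
        rw [← hPdeg]; exact natDegree_lt_natDegree hne hdlt
      exact hne (eq_zero_of_natDegree_lt_card_of_eval_eq_zero _ hx
        (fun i => by simp [hfix i, hfeval i]) (by rw [hcard]; exact h2))
    have := sub_eq_zero.mp h1
    exact this
  have hQf : C r * Q = C a * derivative f := by
    have h1 : C r * Q - C a * derivative f = 0 := by
      apply eq_zero_of_natDegree_lt_card_of_eval_eq_zero _ hx
      · intro i
        have hP' : (derivative P).eval (x i) = a * (derivative f).eval (x i) := by
          rw [hPf, derivative_C_mul]; simp
        have := hmult i
        rw [hP'] at this
        simp [this]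
      · rw [hcard]
        have h2 : (C r * Q).natDegree ≤ d - 2 := by
          refine le_trans (natDegree_mul_le) ?_
          simpa using hQdeg
        have h3 : (C a * derivative f).natDegree ≤ d - 2 := by
          refine le_trans (natDegree_mul_le) ?_
          simp only [natDegree_C, zero_add]
          refine le_trans (natDegree_derivative_le f) ?_
          omega
        calc (C r * Q - C a * derivative f).natDegree
            ≤ max (C r * Q).natDegree (C a * derivative f).natDegree := natDegree_sub_le _ _
          _ ≤ d - 2 := max_le h2 h3
          _ < d - 1 := by omega
    exact sub_eq_zero.mp h1
  refine ⟨a * r⁻¹, by simp [haz, hr], ?_, ?_⟩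
  · rw [hPf]; congr 1; congr 1; field_simp
  · have : Q = C r⁻¹ * (C r * Q) := by
      rw [← mul_assoc, ← C_mul, inv_mul_cancel₀ hr, C_1, one_mul]
    rw [this, hQf, ← mul_assoc, ← C_mul]
    ring_nf
end

section
/- Let K be a field, let F ∈ K[X,Y] be homogeneous of degree d, and let γ ∈ GL₂(K) and c ∈ K× be such that F(γ·(x,y)) = c·F(x,y) for all (x,y) ∈ K² (i.e., F is an invariant of γ). Then for every (x,y) ∈ K², c · (F_Y(x,y), −F_X(x,y)) = (det γ) · γ⁻¹ · (F_Y(γ·(x,y)), −F_X(γ·(x,y))); equivalently φ_F(γ·v) = (c / det γ) · γ · φ_F(v) for all v ∈ K². Consequently the Möbius transformation induced by γ satisfies γ⁻¹ ∘ φ_F ∘ γ = φ_F on P¹, i.e. γ is an automorphism of φ_F. -/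
open MvPolynomial

private lemma chain_rule {K : Type*} [Field K] (a b c e : K) (F : MvPolynomial (Fin 2) K)
    (i : Fin 2) :
    pderiv i (aeval ![C a * X 0 + C b * X 1, C c * X 0 + C e * X 1] F)
      = aeval ![C a * X 0 + C b * X 1, C c * X 0 + C e * X 1] (pderiv 0 F)
          * pderiv i (C a * X 0 + C b * X 1 : MvPolynomial (Fin 2) K)
        + aeval ![C a * X 0 + C b * X 1, C c * X 0 + C e * X 1] (pderiv 1 F)
          * pderiv i (C c * X 0 + C e * X 1 : MvPolynomial (Fin 2) K) := by
  induction F using MvPolynomial.induction_on with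
  | C r => simp
  | add p q hp hq => simp only [map_add, hp, hq]; ring
  | mul_X p j hp =>
      simp only [map_mul, aeval_X, Derivation.leibniz, smul_eq_mul, map_add, hp]
      fin_cases j <;>
        simp [Matrix.cons_val_zero, Matrix.cons_val_one, Pi.single_apply] <;> ring


/-- **Invariant polynomials give automorphisms of `φ_F`.**
Let `F ∈ K[X,Y]` be homogeneous of degree `d` and let `γ = [[a,b],[c,e]] ∈ GL₂(K)`,
`s ∈ K×` be such that `F ∘ γ = s·F` (i.e. `F` is an invariant of `γ`).  Then for every
`v ∈ K²`, `s·(F_Y(v), −F_X(v)) = (det γ) · γ⁻¹ · (F_Y(γ·v), −F_X(γ·v))`; this says exactly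
that the Möbius transformation of `γ` satisfies `γ⁻¹ ∘ φ_F ∘ γ = φ_F`, i.e. `γ` is an
automorphism of `φ_F`. -/
theorem invariant_gives_automorphism
    {K : Type*} [Field K] (d : ℕ) (F : MvPolynomial (Fin 2) K) (hF : F.IsHomogeneous d)
    (a b c e s : K) (hdet : a * e - b * c ≠ 0) (hs : s ≠ 0)
    (hinv : aeval ![C a * X 0 + C b * X 1, C c * X 0 + C e * X 1] F = C s * F) :
    ∀ v : Fin 2 → K,
      s • ![eval v (pderiv 1 F), -(eval v (pderiv 0 F))]
        = (a * e - b * c) •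
            (!![a, b; c, e])⁻¹.mulVec
              ![eval ((!![a, b; c, e]).mulVec v) (pderiv 1 F),
                -(eval ((!![a, b; c, e]).mulVec v) (pderiv 0 F))] := by
  intro v
  -- notation
  set w : Fin 2 → K := (!![a, b; c, e]).mulVec v with hw
  have hw0 : w 0 = a * v 0 + b * v 1 := by
    simp [hw, Matrix.mulVec, dotProduct, Fin.sum_univ_two]
  have hw1 : w 1 = c * v 0 + e * v 1 := by
    simp [hw, Matrix.mulVec, dotProduct, Fin.sum_univ_two]
  have heval : ∀ P : MvPolynomial (Fin 2) K,
      eval v (aeval ![C a * X 0 + C b * X 1, C c * X 0 + C e * X 1] P) = eval w P := by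
    intro P
    induction P using MvPolynomial.induction_on with
    | C r => simp
    | add p q hp hq => simp only [map_add, hp, hq]
    | mul_X p j hp =>
        simp only [map_mul, aeval_X, eval_mul, hp]
        congr 1
        fin_cases j <;> simp [hw0, hw1]
  -- differentiate the invariance relation and evaluate at v
  have key : ∀ i : Fin 2,
      eval w (pderiv 0 F) * eval v (pderiv i (C a * X 0 + C b * X 1 : MvPolynomial (Fin 2) K))
        + eval w (pderiv 1 F) * eval v (pderiv i (C c * X 0 + C e * X 1 : MvPolynomial (Fin 2) K))
        = s * eval v (pderiv i F) := by
    intro i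
    have h := congrArg (fun P => eval v (pderiv i P)) hinv
    simp only [chain_rule, pderiv_C_mul, map_add, map_mul] at h
    rw [heval, heval] at h
    simp only [pderiv_C_mul, map_add, map_mul, eval_C] at h ⊢
    linear_combination h
  have k0 := key 0
  have k1 := key 1
  simp only [map_add, map_mul, pderiv_X, pderiv_C, eval_C, eval_X] at k0 k1
  norm_num [Pi.single_apply] at k0 k1
  -- compute the 2x2 inverse
  have hdet' : (!![a, b; c, e]).det = a * e - b * c := by
    simp [Matrix.det_fin_two_of]
  have hinv2 : (!![a, b; c, e])⁻¹ = (a * e - b * c)⁻¹ • !![e, -b; -c, a] := by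
    rw [Matrix.inv_def, hdet', Matrix.adjugate_fin_two]
    simp [Ring.inverse_eq_inv]
  rw [hinv2]
  have hD : (a * e - b * c) * (a * e - b * c)⁻¹ = 1 := mul_inv_cancel₀ hdet
  funext i
  fin_cases i <;>
    · simp [Matrix.mulVec, dotProduct, Fin.sum_univ_two, ← hw, smul_eq_mul]
      first
        | linear_combination -k1 - (eval w (pderiv 1 F) * e + eval w (pderiv 0 F) * b) * hD
        | linear_combination k0 + (eval w (pderiv 1 F) * c + eval w (pderiv 0 F) * a) * hD
end

section
/- Let K be a field of characteristic different from 2 and 3, let E be the elliptic curve y² = g(x) with g(x) = x³ + a·x² + b·x + c nonsingular over K, and define f(x) = x⁴ + (4a/3)·x³ + 2b·x² + 4c·x + (4ac − b²)/3 (so that 3·f(x) = 2·g(x)·g″(x) − g′(x)² is the 3-division polynomial of E). Then f′(x) = 4·g(x), and for every affine point P = (x₀, y₀) on E with y₀ ≠ 0 (so that [2]P ≠ O), the point [2]P is affine with x-coordinate x([2]P) = x₀ − 3·f(x₀)/f′(x₀). In other words, the Lattès map of P¹ induced by duplication on E is the modified Newton–Raphson map x ↦ x − 3·f(x)/f′(x)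 of the degree-4 polynomial f whose roots are the x-coordinates of the 3-torsion points of E. -/
/-!
Write `g(x₀) = y₀²`. Since `3f = 2gg'' − g'²` and `f' = 4g`, the Newton correction is
`3f/f' = g''/2 − (g'/(2y₀))²`, and for a monic cubic `g''/2 = 3x + a`; hence
`x₀ − 3f(x₀)/f'(x₀) = λ² − a − 2x₀`, the duplication formula.
-/

open Polynomial

section

variable {K : Type*} [Field K]

noncomputable def monicCubic (a b c : K) : K[X] := X ^ 3 + C a * X ^ 2 + C b * X + C c

noncomputable def threeDivisionPoly (a b c : K) : K[X] :=
  X ^ 4 + C (4 * a / 3) * X ^ 3 + C (2 * b) * X ^ 2 + C (4 * c) * X + C ((4 * a * c - b ^ 2) / 3)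

theorem derivative_monicCubic (a b c : K) :
    derivative (monicCubic a b c) = C 3 * X ^ 2 + C (2 * a) * X + C b := by
  simp only [monicCubic, derivative_add, derivative_X_pow, derivative_C_mul_X_pow,
    derivative_C_mul_X, derivative_C, C_mul]
  push_cast; ring

theorem derivative_derivative_monicCubic (a b c : K) :
    derivative (derivative (monicCubic a b c)) = C 6 * X + C (2 * a) := by
  simp only [derivative_monicCubic, derivative_add, derivative_C_mul_X_pow, derivative_C_mul_X,
    derivative_C]
  simp only [C_mul, map_ofNat, Nat.cast_ofNat]; ring

theorem C_div_three_mul_three (h3 : (3 : K) ≠ 0) (r : K) : C (r / 3) * 3 = C r := by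
  rw [← map_ofNat C 3, ← C_mul, div_mul_cancel₀ r h3]

theorem C_three_mul_threeDivisionPoly (h3 : (3 : K) ≠ 0) (a b c : K) :
    C 3 * threeDivisionPoly a b c = C 2 * monicCubic a b c *
      derivative (derivative (monicCubic a b c)) - derivative (monicCubic a b c) ^ 2 := by
  have ha := C_div_three_mul_three h3 (4 * a)
  have hd := C_div_three_mul_three h3 (4 * a * c - b ^ 2)
  rw [derivative_derivative_monicCubic, derivative_monicCubic, threeDivisionPoly, monicCubic]
  simp only [map_ofNat, C_mul, C_sub, C_pow] at ha hd ⊢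
  linear_combination X ^ 3 * ha + hd

theorem derivative_threeDivisionPoly (h3 : (3 : K) ≠ 0) (a b c : K) :
    derivative (threeDivisionPoly a b c) = C 4 * monicCubic a b c := by
  have ha := C_div_three_mul_three h3 (4 * a)
  simp only [threeDivisionPoly, monicCubic, derivative_add, derivative_X_pow,
    derivative_C_mul_X_pow, derivative_C_mul_X, derivative_C]
  simp only [map_ofNat, C_mul, Nat.cast_ofNat] at ha ⊢
  linear_combination X ^ 2 * ha

theorem sub_three_mul_div_derivative_eq {f g : K[X]} (h2 : (2 : K) ≠ 0)
    (hf : C 3 * f = C 2 * g * derivative (derivative g) - derivative g ^ 2)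
    (hf' : derivative f = C 4 * g) {x y : K} (hy : y ^ 2 = g.eval x) (hy0 : y ≠ 0) :
    x - 3 * f.eval x / (derivative f).eval x
      = x - (derivative (derivative g)).eval x / 2 + ((derivative g).eval x / (2 * y)) ^ 2 := by
  have hf_eval := congrArg (eval x) hf
  simp only [eval_mul, eval_sub, eval_pow, eval_C, ← hy] at hf_eval
  have h4 : (4 : K) ≠ 0 := by
    rw [show (4 : K) = 2 * 2 by norm_num]; exact mul_ne_zero h2 h2
  rw [hf', eval_mul, eval_C, ← hy]
  field_simp
  linear_combination (-4) * hf_eval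

end

theorem lattes_duplication_is_modified_newton_general
    {K : Type*} [Field K] (h2 : (2 : K) ≠ 0) (h3 : (3 : K) ≠ 0)
    (a b c : K) (g f : K[X])
    (hg : g = X ^ 3 + C a * X ^ 2 + C b * X + C c)
    (hf : f = X ^ 4 + C (4 * a / 3) * X ^ 3 + C (2 * b) * X ^ 2 + C (4 * c) * X
            + C ((4 * a * c - b ^ 2) / 3)) :
    (C (3 : K) * f = C 2 * g * derivative (derivative g) - (derivative g) ^ 2) ∧
    (derivative f = C 4 * g) ∧
    (∀ x₀ y₀ : K, y₀ ^ 2 = g.eval x₀ → y₀ ≠ 0 →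
      ((derivative g).eval x₀ / (2 * y₀)) ^ 2 - a - 2 * x₀
        = x₀ - 3 * f.eval x₀ / (derivative f).eval x₀) := by
  change g = monicCubic a b c at hg
  change f = threeDivisionPoly a b c at hf
  subst hg hf
  have hdiv := C_three_mul_threeDivisionPoly h3 a b c
  have hf' := derivative_threeDivisionPoly h3 a b c
  refine ⟨hdiv, hf', fun x₀ y₀ hy hy0 => ?_⟩
  rw [sub_three_mul_div_derivative_eq h2 hdiv hf' hy hy0, derivative_derivative_monicCubic]
  simp only [eval_add, eval_mul, eval_C, eval_X]
  field_simp
  ring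

/-- **The Lattès map of duplication is a modified Newton–Raphson map.**
Let `K` be a field of characteristic `≠ 2, 3`, `E : y² = g(x)` with
`g = x³ + a·x² + b·x + c` nonsingular, and
`f = x⁴ + (4a/3)x³ + 2b·x² + 4c·x + (4ac − b²)/3` (so `3f = 2gg'' − g'²` is the
3-division polynomial).  Then `f' = 4g`, and for every affine point `(x₀, y₀)` on `E`
with `y₀ ≠ 0`, the `x`-coordinate `λ² − a − 2x₀` of `[2](x₀,y₀)` (where `λ = g'(x₀)/(2y₀)`)
equals `x₀ − 3·f(x₀)/f'(x₀)`. -/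
theorem lattes_duplication_is_modified_newton
    {K : Type*} [Field K] (h2 : (2 : K) ≠ 0) (h3 : (3 : K) ≠ 0)
    (a b c : K) (g f : K[X])
    (hg : g = X ^ 3 + C a * X ^ 2 + C b * X + C c)
    (hns : Squarefree g)
    (hf : f = X ^ 4 + C (4 * a / 3) * X ^ 3 + C (2 * b) * X ^ 2 + C (4 * c) * X
            + C ((4 * a * c - b ^ 2) / 3)) :
    (C (3 : K) * f = C 2 * g * derivative (derivative g) - (derivative g) ^ 2) ∧
    (derivative f = C 4 * g) ∧
    (∀ x₀ y₀ : K, y₀ ^ 2 = g.eval x₀ → y₀ ≠ 0 →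
      ((derivative g).eval x₀ / (2 * y₀)) ^ 2 - a - 2 * x₀
        = x₀ - 3 * f.eval x₀ / (derivative f).eval x₀) :=
  lattes_duplication_is_modified_newton_general h2 h3 a b c g f hg hf
end

section
/- Let K be a field, let d ≥ 2 with (d : K) ≠ 0, and let f ∈ K[x] be a squarefree polynomial of degree d with leading coefficient a_d. Set g(x) = d·f(x) − x·f′(x) (the dehomogenization of F_Y, of degree at most d − 1), and assume deg g = d − 1 and deg f′ = d − 1. Then a_d · Res(g, −f′) = d^{d−2} · Res(f, f′), where Res(g, −f′) is the resultant in degrees (d−1, d−1) and Res(f, f′) the resultant in degrees (d, d−1). Equivalently, writing Disc(F) for the discriminant of F (so that a_d·Disc(F) = (−1)^{d(d−1)/2}·Res(f, f′)), the resultant of the pair of coordinate polynomials of φ_F satisfies Res(φ_F) = (−1)^{d(d−1)/2}·d^{d−2}·Disc(F). -/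
/-! After identifying the Sylvester determinant with Mathlib's `Polynomial.resultant`, everything
follows from the row-operation rules for resultants. Since `g = d·f + f'·(−X)` with
`deg X + deg f' ≤ d`, we get `Res_{d,d−1}(g, f') = d^{d−1}·Res_{d,d−1}(f, f')`. By Euler's identity
the coefficient of `x^k` in `g` is `(d − k)·a_k`, so `g` has degree `≤ d − 1`, and lowering its
formal degree from `d` to `d − 1` costs the factor `(−1)^{d−1}·f'_{d−1} = (−1)^{d−1}·d·a_d`; the sign
is absorbed by passing from `f'` to `−f'`, and cancelling one factor `d` finishes. -/

open Polynomial

/-- The Sylvester matrix of `P` (formal degree `m`) and `Q` (formal degree `n`):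
an `(m + n) × (m + n)` matrix whose first `n` rows are the shifts
`(coeff P m, …, coeff P 0)` of the coefficients of `P` and whose last `m` rows are the
shifts `(coeff Q n, …, coeff Q 0)` of the coefficients of `Q`. -/
noncomputable def sylvesterMatrix {K : Type*} [Field K] (m n : ℕ) (P Q : Polynomial K) :
    Matrix (Fin (m + n)) (Fin (m + n)) K :=
  Matrix.of fun i j =>
    if (i : ℕ) < n then
      (if (i : ℕ) ≤ (j : ℕ) ∧ (j : ℕ) ≤ (i : ℕ) + m then P.coeff (m + i - j) else 0)
    else
      (if (i : ℕ) - n ≤ (j : ℕ) ∧ (j : ℕ) ≤ ((i : ℕ) - n) + n then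
        Q.coeff (n + ((i : ℕ) - n) - j) else 0)

/-- The resultant `Res_{m,n}(P, Q)` of `P` and `Q` in formal degrees `(m, n)`,
as the determinant of the Sylvester matrix. -/
noncomputable def resultant {K : Type*} [Field K] (m n : ℕ) (P Q : Polynomial K) : K :=
  (sylvesterMatrix m n P Q).det

theorem sylvesterMatrix_eq_transpose_sylvester_submatrix_rev {K : Type*} [Field K] (m n : ℕ)
    (P Q : K[X]) :
    sylvesterMatrix m n P Q = (sylvester P Q m n).transpose.submatrix Fin.revPerm Fin.revPerm := by
  ext i j
  rw [← Fin.rev_rev i]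
  generalize i.rev = i
  induction i using Fin.addCases <;>
    simp only [sylvesterMatrix, sylvester, Matrix.submatrix_apply, Matrix.transpose_apply,
      Matrix.of_apply, Fin.revPerm_apply, Fin.rev_rev, Fin.addCases_left, Fin.addCases_right,
      Fin.val_rev, Fin.val_castAdd, Fin.val_natAdd, Set.mem_Icc] <;>
    split_ifs <;> first | omega | (congr 1 <;> omega)

theorem resultant_eq_polynomial_resultant {K : Type*} [Field K] (m n : ℕ) (P Q : K[X]) :
    resultant m n P Q = P.resultant Q m n := by
  rw [_root_.resultant, sylvesterMatrix_eq_transpose_sylvester_submatrix_rev,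
    Matrix.det_submatrix_equiv_self, Matrix.det_transpose, Polynomial.resultant]

theorem coeff_C_mul_sub_X_mul_derivative {R : Type*} [Ring R] (f : R[X]) (d k : ℕ) :
    (C (d : R) * f - X * derivative f).coeff k = ((d : R) - k) * f.coeff k := by
  cases k with
  | zero => simp
  | succ k =>
    rw [coeff_sub, coeff_C_mul, coeff_X_mul, coeff_derivative, sub_mul, Nat.cast_comm d,
      Nat.cast_comm (k + 1), Nat.cast_succ]

theorem natDegree_C_mul_sub_X_mul_derivative_le {R : Type*} [Ring R] (f : R[X]) {d : ℕ}
    (hf : f.natDegree ≤ d) :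
    (C (d : R) * f - X * derivative f).natDegree ≤ d - 1 := by
  refine natDegree_le_iff_coeff_eq_zero.mpr fun k hk => ?_
  rw [coeff_C_mul_sub_X_mul_derivative]
  rcases eq_or_lt_of_le (show d ≤ k by omega) with rfl | hdk
  · rw [sub_self, zero_mul]
  · rw [coeff_eq_zero_of_natDegree_lt (hf.trans_lt hdk), mul_zero]

theorem resultant_C_mul_sub_X_mul_derivative {R : Type*} [CommRing R] (f : R[X]) (n : ℕ)
    (hf : f.natDegree ≤ n + 1) :
    ((n + 1 : ℕ) : R) ^ n * f.resultant (derivative f) (n + 1) n =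
      ((n + 1 : ℕ) : R) * f.coeff (n + 1) *
        (C ((n + 1 : ℕ) : R) * f - X * derivative f).resultant (-derivative f) n n := by
  set g := C ((n + 1 : ℕ) : R) * f - X * derivative f
  have hf' : (derivative f).natDegree ≤ n := (natDegree_derivative_le f).trans (by omega)
  have hg : g.natDegree ≤ n := natDegree_C_mul_sub_X_mul_derivative_le f hf
  have hX : (-X : R[X]).natDegree + n ≤ n + 1 := by
    rw [natDegree_neg]
    linarith [natDegree_X_le (R := R)]
  calc ((n + 1 : ℕ) : R) ^ n * f.resultant (derivative f) (n + 1) n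
      = (C ((n + 1 : ℕ) : R) * f).resultant (derivative f) (n + 1) n :=
        (resultant_C_mul_left _ _ _ _ _).symm
    _ = g.resultant (derivative f) (n + 1) n := by
        rw [show g = C ((n + 1 : ℕ) : R) * f + derivative f * -X by ring,
          resultant_add_mul_left _ _ _ _ _ hX hf']
    _ = (-1) ^ n * (derivative f).coeff n * g.resultant (derivative f) n n :=
        resultant_succ_left_deg _ _ _ _ hg
    _ = ((n + 1 : ℕ) : R) * f.coeff (n + 1) * g.resultant (-derivative f) n n := by
        rw [← neg_one_mul (derivative f), ← C_1, ← C_neg, resultant_C_mul_right,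
          coeff_derivative]
        push_cast
        ring

theorem resultant_phiF_eq_discriminant_general
    {K : Type*} [Field K] (d : ℕ) (hd : 2 ≤ d) (hdK : (d : K) ≠ 0)
    (f : K[X]) (hdeg : f.natDegree = d)
    (g : K[X]) (hg : g = C (d : K) * f - X * derivative f) :
    f.leadingCoeff * resultant (d - 1) (d - 1) g (-derivative f)
      = (d : K) ^ (d - 2) * resultant d (d - 1) f (derivative f) := by
  obtain ⟨n, rfl⟩ : ∃ n, d = n + 1 + 1 := ⟨d - 2, by omega⟩
  rw [resultant_eq_polynomial_resultant, resultant_eq_polynomial_resultant, leadingCoeff, hdeg, hg,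
    show n + 1 + 1 - 1 = n + 1 by omega, show n + 1 + 1 - 2 = n by omega]
  apply mul_left_cancel₀ hdK
  linear_combination -resultant_C_mul_sub_X_mul_derivative f (n + 1) hdeg.le

/-- **Resultant of `φ_F` versus discriminant of `F`.**
Let `f` be squarefree of degree `d ≥ 2` with `(d : K) ≠ 0`, leading coefficient `a_d`, and
`g = d·f − x·f'` (the dehomogenization of `F_Y`), with `deg g = d − 1` and `deg f' = d − 1`.
Then `a_d · Res_{d−1,d−1}(g, −f') = d^{d−2} · Res_{d,d−1}(f, f')`; equivalently, with
`a_d·Disc F = (−1)^{d(d−1)/2}·Res(f, f')`, the resultant of the pair of coordinate forms of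
`φ_F` satisfies `Res(φ_F) = (−1)^{d(d−1)/2}·d^{d−2}·Disc F`. -/
theorem resultant_phiF_eq_discriminant
    {K : Type*} [Field K] (d : ℕ) (hd : 2 ≤ d) (hdK : (d : K) ≠ 0)
    (f : K[X]) (hsq : Squarefree f) (hdeg : f.natDegree = d)
    (g : K[X]) (hg : g = C (d : K) * f - X * derivative f)
    (hgdeg : g.natDegree = d - 1) (hfpdeg : (derivative f).natDegree = d - 1) :
    f.leadingCoeff * resultant (d - 1) (d - 1) g (-derivative f)
      = (d : K) ^ (d - 2) * resultant d (d - 1) f (derivative f) :=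
  resultant_phiF_eq_discriminant_general d hd hdK f hdeg g hg
end

section
/- Let K be an algebraically closed field of characteristic 0 and let α ∈ K ∖ {0, 1}. Let F(X,Y) = X·Y·(X − Y)·(X − αY) = X³Y − (α+1)X²Y² + αXY³ and φ(x, y) = (F_Y(x,y), −F_X(x,y)). For x ∈ K write (A, B) = φ(φ(x, 1)). Then A = x·B (i.e., (x : 1) is fixed by the second iterate of the induced map of P¹) if and only if x ∈ {0, 1, α} or x² = α or (x − 1)² = 1 − α or (x − α)² = α² − α. In other words, the points of period dividing 2 of φ_F are {±√α, 1 ± √(1 − α), α ± √(α² − α)} together with the fixed points {0, 1, ∞, α}. -/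
open MvPolynomial

/-- **Points of period dividing 2 in the degree-4 example.**
Let `K` be algebraically closed of characteristic 0, `α ∉ {0,1}`,
`F = X³Y − (α+1)X²Y² + αXY³` and `φ(x, y) = (F_Y(x,y), −F_X(x,y))`.  Writing
`(A, B) = φ(φ(x, 1))`, the point `(x : 1)` is fixed by the second iterate of the induced
map of `P¹` (i.e. `A = x·B`) iff `x ∈ {0, 1, α}` or `x² = α` or `(x − 1)² = 1 − α` or
`(x − α)² = α² − α`; i.e. the period-≤2 points are
`{±√α, 1 ± √(1 − α), α ± √(α² − α)} ∪ {0, 1, ∞, α}`. -/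
theorem degree_four_two_periodic_points
    {K : Type*} [Field K] [IsAlgClosed K] [CharZero K]
    (α : K) (hα0 : α ≠ 0) (hα1 : α ≠ 1)
    (F : MvPolynomial (Fin 2) K)
    (hF : F = X 0 ^ 3 * X 1 - C (α + 1) * X 0 ^ 2 * X 1 ^ 2 + C α * X 0 * X 1 ^ 3)
    (φ : (Fin 2 → K) → (Fin 2 → K))
    (hφ : ∀ v, φ v = ![eval v (pderiv 1 F), -(eval v (pderiv 0 F))]) :
    ∀ x : K,
      (φ (φ ![x, 1])) 0 = x * (φ (φ ![x, 1])) 1 ↔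
        (x = 0 ∨ x = 1 ∨ x = α ∨ x ^ 2 = α ∨ (x - 1) ^ 2 = 1 - α
          ∨ (x - α) ^ 2 = α ^ 2 - α) := by
  have hd0 : ∀ v : Fin 2 → K, eval v (pderiv 0 F)
      = 3 * v 0 ^ 2 * v 1 - (α + 1) * (2 * v 0) * v 1 ^ 2 + α * v 1 ^ 3 := by
    intro v; subst hF; simp [pderiv_mul, pderiv_pow, pderiv_X]; try ring
  have hd1 : ∀ v : Fin 2 → K, eval v (pderiv 1 F)
      = v 0 ^ 3 - (α + 1) * v 0 ^ 2 * (2 * v 1) + α * v 0 * (3 * v 1 ^ 2) := by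
    intro v; subst hF; simp [pderiv_mul, pderiv_pow, pderiv_X]; try ring
  intro x
  have key : (φ (φ ![x, 1])) 0 - x * (φ (φ ![x, 1])) 1
      = -8 * (x * ((x - 1) * ((x - α) * ((x ^ 2 - α) *
          (((x - 1) ^ 2 - (1 - α)) * ((x - α) ^ 2 - (α ^ 2 - α))))))) := by
    rw [hφ, hφ]
    simp only [hd0, hd1, Matrix.cons_val_zero, Matrix.cons_val_one, Matrix.head_cons]
    try ring
  rw [← sub_eq_zero, key]
  have h8 : (-8 : K) ≠ 0 := by norm_num
  simp only [mul_eq_zero, h8, false_or, sub_eq_zero]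
end
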